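/- arXiv:math/0006085 — 7 statements merged into one kernel-verified Lean document; each statement's English description precedes it below -/
import Mathlib

section
/- Let Q_ψ(y_1,...,y_n) = -2cos(ψ)·∑_{i=1}^n y_i² + 2∑_{i=1}^{n-1} y_i y_{i+1} with ψ = 2πk/(n+1) for an integer 1 ≤ k ≤ (n+1)/2. Then the number of negative eigenvalues (the index) of Q_ψ equals n - 2k if 2k ≤ n, and equals 0 if n is odd and k = (n+1)/2. -/
/-!
The matrix of `Q_ψ` is the tridiagonal Toeplitz matrix with diagonal `a = -2 cos ψ` and
off-diagonal `1`. Any sequence `f` with `f 0 = f (n + 1) = 0` and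
`f m + f (m + 2) = c * f (m + 1)` gives an eigenvector `(f 1, …, f n)` with eigenvalue `a + c`;
`f m = sin (m θ)` with `θ = sπ/(n+1)` is such a sequence for `c = 2 cos θ`. These `n` eigenvalues
`2 (cos (sπ/(n+1)) - cos ψ)` are distinct, so they are the whole spectrum, and since `cos` is
decreasing on `[0, π]` the negative ones are those with `sπ/(n+1) > ψ = 2kπ/(n+1)`, i.e. `s > 2k`;
there are `n - 2k` of them, and none when `2k = n + 1`.
-/

open Real Matrix Finset

theorem Matrix.IsHermitian.eigenvalues_map_eq_of_mulVec_eq {n : Type*} [Fintype n]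
    [DecidableEq n] {A : Matrix n n ℝ} (hA : A.IsHermitian) {μ : n → ℝ}
    (hμ : Function.Injective μ) {v : n → n → ℝ} (hv : ∀ s, v s ≠ 0)
    (hAv : ∀ s, A *ᵥ v s = μ s • v s) :
    univ.val.map hA.eigenvalues = univ.val.map μ := by
  have hroots : A.charpoly.roots = univ.val.map hA.eigenvalues := by
    simp [hA.roots_charpoly_eq_eigenvalues, RCLike.ofReal_real_eq_id]
  have hroot (s : n) : μ s ∈ A.charpoly.roots := by
    have : Module.End.HasEigenvalue A.toLin' (μ s) :=
      Module.End.hasEigenvalue_of_hasEigenvector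
        ⟨Module.End.mem_eigenspace_iff.mpr (by simpa using hAv s), hv s⟩
    rw [Polynomial.mem_roots A.charpoly_monic.ne_zero, ← mem_spectrum_iff_isRoot_charpoly,
      ← spectrum_toLin']
    exact this.mem_spectrum
  rw [← hroots]
  refine (Multiset.eq_of_le_of_card_le ?_ (by simp [hroots])).symm
  rw [Multiset.le_iff_subset (univ.nodup.map hμ)]
  intro x hx
  obtain ⟨s, -, rfl⟩ := Multiset.mem_map.mp hx
  exact hroot s

theorem Finset.card_filter_comp_eq_of_map_eq {ι α : Type*} [Fintype ι] {f g : ι → α}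
    (h : univ.val.map f = univ.val.map g) (p : α → Prop) [DecidablePred p] :
    #{i | p (f i)} = #{i | p (g i)} := by
  simpa [Multiset.countP_map, card_def] using congrArg (Multiset.countP p) h

theorem Fin.card_filter_lt_val_add_one (n m : ℕ) : #{s : Fin n | m < (s : ℕ) + 1} = n - m := by
  have hcompl := card_filter_add_card_filter_not (s := univ) (fun s : Fin n => (s : ℕ) < m)
  rw [Fin.card_filter_val_lt, card_univ, Fintype.card_fin] at hcompl
  simp only [not_lt, Nat.lt_add_one_iff] at hcompl ⊢
  omega

theorem Fin.sum_ite_val_add_one_eq {M : Type*} [AddCommMonoid M] {n m : ℕ} (f : ℕ → M)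
    (hf₀ : f 0 = 0) (hfn : f (n + 1) = 0) (hm : m ≤ n + 1) :
    ∑ j : Fin n, (if (j : ℕ) + 1 = m then f (j + 1) else 0) = f m := by
  obtain _ | p := m
  · simp [hf₀]
  · simp only [Nat.add_right_cancel_iff]
    rw [Fin.sum_univ_eq_sum_range (fun j => if j = p then f (j + 1) else 0), sum_ite_eq']
    split_ifs with hp
    · rfl
    · rw [show p = n by simp at hp; omega, hfn]

theorem cos_mul_pi_div_lt_cos_iff {m m' N : ℕ} (hm : m ≤ N) (hm' : m' ≤ N) :
    cos (m * π / N) < cos (m' * π / N) ↔ m' < m := by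
  obtain rfl | hN := N.eq_zero_or_pos
  · simp only [Nat.le_zero] at hm hm'
    simp [hm, hm']
  have mem_Icc {l : ℕ} (hl : l ≤ N) : (l : ℝ) * π / N ∈ Set.Icc 0 π := by
    refine ⟨by positivity, (div_le_iff₀ (by positivity)).mpr ?_⟩
    rw [mul_comm]
    gcongr
  rw [strictAntiOn_cos.lt_iff_gt (mem_Icc hm) (mem_Icc hm'),
    div_lt_div_iff_of_pos_right (by positivity), mul_lt_mul_iff_left₀ pi_pos, Nat.cast_lt]

theorem injOn_cos_mul_pi_div {N : ℕ} :
    Set.InjOn (fun m : ℕ => cos (m * π / N)) (Set.Iic N) := by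
  intro m hm m' hm' h
  have h₁ := (cos_mul_pi_div_lt_cos_iff hm hm').not.mp h.not_lt
  have h₂ := (cos_mul_pi_div_lt_cos_iff hm' hm).not.mp h.symm.not_lt
  omega

theorem sin_mul_pi_div_pos {m N : ℕ} (h₀ : 0 < m) (h : m < N) : 0 < sin (m * π / N) := by
  have hN : (0 : ℝ) < N := by exact_mod_cast h₀.trans h
  refine sin_pos_of_pos_of_lt_pi (by positivity) ((div_lt_iff₀ hN).mpr ?_)
  rw [mul_comm]
  gcongr

def tridiagToeplitz (n : ℕ) (a b : ℝ) : Matrix (Fin n) (Fin n) ℝ :=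
  Matrix.of fun i j => if i = j then a else if ((i : ℤ) - (j : ℤ)).natAbs = 1 then b else 0

namespace tridiagToeplitz

variable {n : ℕ} {a b : ℝ}

theorem apply_eq (i j : Fin n) : tridiagToeplitz n a b i j =
    (if (j : ℕ) + 1 = i + 1 then a else 0) + (if (j : ℕ) + 1 = i + 2 then b else 0) +
      (if (j : ℕ) + 1 = i then b else 0) := by
  simp only [tridiagToeplitz, Matrix.of_apply, Fin.ext_iff]
  split_ifs <;> first | omega | simp_all

theorem mulVec_of_recurrence {f : ℕ → ℝ} {c : ℝ} (hf₀ : f 0 = 0) (hfn : f (n + 1) = 0)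
    (hrec : ∀ m, f m + f (m + 2) = c * f (m + 1)) :
    tridiagToeplitz n a b *ᵥ (fun i : Fin n => f (i + 1)) =
      (a + b * c) • fun i : Fin n => f (i + 1) := by
  ext i
  have hi := i.isLt
  simp only [mulVec, dotProduct, apply_eq, add_mul, ite_mul, zero_mul, sum_add_distrib,
    Pi.smul_apply, smul_eq_mul]
  have row (m : ℕ) (hm : m ≤ n + 1) (x : ℝ) :
      ∑ j : Fin n, (if (j : ℕ) + 1 = m then x * f (j + 1) else 0) = x * f m := by
    simp only [← mul_ite_zero, ← mul_sum, Fin.sum_ite_val_add_one_eq f hf₀ hfn hm]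
  rw [row _ (by omega), row _ (by omega), row _ (by omega), mul_assoc, ← hrec]
  ring

theorem mulVec_sin {θ : ℝ} (hθ : sin ((n + 1 : ℕ) * θ) = 0) :
    tridiagToeplitz n a b *ᵥ (fun i : Fin n => sin ((i + 1 : ℕ) * θ)) =
      (a + b * (2 * cos θ)) • fun i : Fin n => sin ((i + 1 : ℕ) * θ) := by
  refine mulVec_of_recurrence (f := fun m : ℕ => sin (m * θ)) (by simp) hθ fun m ↦ ?_
  have := two_mul_sin_mul_cos ((m + 1 : ℕ) * θ) θ
  push_cast at this ⊢
  rw [mul_right_comm, this]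
  ring_nf

theorem eigenvalues_map_eq (hA : (tridiagToeplitz n a b).IsHermitian) (hb : b ≠ 0) :
    univ.val.map hA.eigenvalues =
      univ.val.map fun s : Fin n => a + b * (2 * cos ((s + 1 : ℕ) * π / (n + 1 : ℕ))) := by
  refine hA.eigenvalues_map_eq_of_mulVec_eq (v := fun s i ↦
    sin ((i + 1 : ℕ) * ((s + 1 : ℕ) * π / (n + 1 : ℕ)))) ?_ ?_ fun s ↦ mulVec_sin ?_
  · intro s t h
    have := injOn_cos_mul_pi_div (N := n + 1) (show (s : ℕ) + 1 ∈ Set.Iic (n + 1) by simp)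
      (show (t : ℕ) + 1 ∈ Set.Iic (n + 1) by simp) (by simpa [hb] using h)
    exact Fin.ext (by simpa using this)
  · intro s hs
    refine (sin_mul_pi_div_pos (m := s + 1) (N := n + 1) (by omega) (by omega)).ne' ?_
    simpa using congrFun hs ⟨0, s.pos⟩
  · rw [mul_div_cancel₀ _ (by positivity)]
    exact sin_nat_mul_pi _

end tridiagToeplitz

theorem index_of_Q_psi_general (n k : ℕ) (hk2 : 2 * k ≤ n + 1)
    (Q : Matrix (Fin n) (Fin n) ℝ)
    (hQdef : ∀ i j : Fin n, Q i j =
      if i = j then -2 * Real.cos (2 * π * k / (n + 1))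
      else if ((i : ℤ) - (j : ℤ)).natAbs = 1 then 1 else 0)
    (hQ : Q.IsHermitian) :
    (2 * k ≤ n →
      (Finset.univ.filter fun s : Fin n => hQ.eigenvalues s < 0).card = n - 2 * k) ∧
    (Odd n → 2 * k = n + 1 →
      (Finset.univ.filter fun s : Fin n => hQ.eigenvalues s < 0).card = 0) := by
  have hQ_eq : Q = tridiagToeplitz n (-2 * cos (2 * π * k / (n + 1))) 1 := by
    ext i j
    exact hQdef i j
  subst hQ_eq
  have hψ : 2 * π * k / (n + 1) = ((2 * k : ℕ) : ℝ) * π / (n + 1 : ℕ) := by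
    push_cast
    ring
  have hindex : #{s | hQ.eigenvalues s < 0} = n - 2 * k := by
    rw [card_filter_comp_eq_of_map_eq (tridiagToeplitz.eigenvalues_map_eq hQ one_ne_zero) (· < 0),
      ← Fin.card_filter_lt_val_add_one]
    refine congrArg card (filter_congr fun s _ ↦ ?_)
    rw [hψ, ← cos_mul_pi_div_lt_cos_iff (by omega) hk2]
    constructor <;> intro h <;> linarith
  exact ⟨fun _ ↦ hindex, fun _ _ ↦ by omega⟩

/-- Let `Q_ψ` be the quadratic form on `ℝⁿ` given by the symmetric matrix with
diagonal entries `-2 cos ψ` and entries `1` at positions `|i - j| = 1`, where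
`ψ = 2πk/(n+1)` for an integer `1 ≤ k ≤ (n+1)/2`.  The number of negative
eigenvalues (the index) of `Q_ψ` equals `n - 2k` if `2k ≤ n`, and equals `0` if
`n` is odd and `k = (n+1)/2`. -/
theorem index_of_Q_psi (n k : ℕ) (hk1 : 1 ≤ k) (hk2 : 2 * k ≤ n + 1)
    (Q : Matrix (Fin n) (Fin n) ℝ)
    (hQdef : ∀ i j : Fin n, Q i j =
      if i = j then -2 * Real.cos (2 * π * k / (n + 1))
      else if ((i : ℤ) - (j : ℤ)).natAbs = 1 then 1 else 0)
    (hQ : Q.IsHermitian) :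
    (2 * k ≤ n →
      (Finset.univ.filter fun s : Fin n => hQ.eigenvalues s < 0).card = n - 2 * k) ∧
    (Odd n → 2 * k = n + 1 →
      (Finset.univ.filter fun s : Fin n => hQ.eigenvalues s < 0).card = 0) :=
  index_of_Q_psi_general n k hk2 Q hQdef hQ
end

section
/- For any s ≥ 0, the product of binomial coefficients ∏_{r=0}^{s-1} C(2(2^r) + 2(2^{r+1} - 1), 2(2^r)) taken along the partial sums 1, 1+2, 1+2+4, ..., is odd; equivalently, the iterated product δ_1 δ_2 δ_{2^2} ⋯ δ_{2^s} equals an odd integer multiple of δ_{2^{s+1}-1} in the ring where δ_i δ_j = C(2i+2j, 2i) δ_{i+j}. -/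
/-!
By Lucas's theorem, `C(2a, 2b) ≡ C(a, b) [MOD 2]`, and `C(2 ^ m - 1, k)` is odd for every
`k < 2 ^ m` since all binary digits of `2 ^ m - 1` are `1`. Multiplying in the factors
`δ_{2 ^ r}` one at a time, the new coefficient is `C(2i + 2j, 2i)` with `i + j = 2 ^ (r + 1) - 1`,
hence odd.
-/

open Finset

namespace Nat

theorem choose_two_mul_add_one_modEq_two (n k : ℕ) :
    (2 * n + 1).choose k ≡ n.choose (k / 2) [MOD 2] := by
  have : Fact (Nat.Prime 2) := ⟨Nat.prime_two⟩
  have hlucas :=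
    Choose.choose_modEq_choose_mod_mul_choose_div_nat (p := 2) (n := 2 * n + 1) (k := k)
  rw [show (2 * n + 1) % 2 = 1 by omega, show (2 * n + 1) / 2 = n by omega] at hlucas
  rcases Nat.mod_two_eq_zero_or_one k with hk | hk <;> simpa [hk] using hlucas

theorem odd_choose_two_pow_sub_one {m k : ℕ} (hk : k < 2 ^ m) : Odd ((2 ^ m - 1).choose k) := by
  induction m generalizing k with
  | zero => simp [Nat.lt_one_iff.mp hk]
  | succ m ih =>
    have hpow : 2 ^ (m + 1) = 2 * 2 ^ m := pow_succ'
    rw [show 2 ^ (m + 1) - 1 = 2 * (2 ^ m - 1) + 1 by omega, Nat.odd_iff,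
      choose_two_mul_add_one_modEq_two]
    exact Nat.odd_iff.mp (ih (by omega))

theorem odd_choose_two_mul_two_mul_of_add_add_one_eq_two_pow {i j m : ℕ} (h : i + j + 1 = 2 ^ m) :
    Odd ((2 * i + 2 * j).choose (2 * i)) := by
  have : Fact (Nat.Prime 2) := ⟨Nat.prime_two⟩
  rw [← mul_add, Nat.odd_iff, Choose.choose_mul_mul_modEq_choose_nat,
    show i + j = 2 ^ m - 1 by omega]
  exact Nat.odd_iff.mp (odd_choose_two_pow_sub_one (by omega))

end Nat

def twoPowDeltaCoeff (s : ℕ) : ℕ :=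
  ∏ r ∈ Icc 1 s, (2 * (2 ^ r - 1) + 2 * 2 ^ r).choose (2 * 2 ^ r)

theorem twoPowDeltaCoeff_succ (s : ℕ) :
    twoPowDeltaCoeff (s + 1) =
      twoPowDeltaCoeff s * (2 * (2 ^ (s + 1) - 1) + 2 * 2 ^ (s + 1)).choose (2 * 2 ^ (s + 1)) :=
  prod_Icc_succ_top (by omega) _

theorem odd_twoPowDeltaCoeff (s : ℕ) : Odd (twoPowDeltaCoeff s) := by
  refine prod_induction _ Odd (fun _ _ ↦ Odd.mul) odd_one fun r _ ↦ ?_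
  rw [add_comm]
  exact Nat.odd_choose_two_mul_two_mul_of_add_add_one_eq_two_pow (m := r + 1)
    (by have := Nat.one_le_two_pow (n := r); rw [pow_succ]; omega)

theorem prod_delta_two_pow {R : Type*} [CommSemiring R] {δ : ℕ → R}
    (hδ : ∀ i j : ℕ, δ i * δ j = ((2 * i + 2 * j).choose (2 * i)) • δ (i + j)) (s : ℕ) :
    ∏ r ∈ range (s + 1), δ (2 ^ r) = twoPowDeltaCoeff s • δ (2 ^ (s + 1) - 1) := by
  induction s with
  | zero => simp [twoPowDeltaCoeff]
  | succ s ih =>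
    have hpow : 2 ^ (s + 1 + 1) = 2 * 2 ^ (s + 1) := pow_succ' 2 (s + 1)
    have hpos := Nat.one_le_two_pow (n := s + 1)
    rw [prod_range_succ, ih, smul_mul_assoc, mul_comm, hδ, smul_smul, twoPowDeltaCoeff_succ]
    congr 3 <;> omega

/-- The product of the binomial coefficients appearing when multiplying
`δ_1 · δ_2 · δ_{2^2} ⋯ δ_{2^s}` (where `δ_i δ_j = C(2i+2j, 2i) δ_{i+j}`) along the
partial sums `1, 1+2, 1+2+4, ...` is odd; equivalently, in any commutative ring
with elements `δ_i` satisfying `δ_i δ_j = C(2i+2j, 2i) • δ_{i+j}`, the product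
`δ_1 δ_2 δ_4 ⋯ δ_{2^s}` is an odd multiple of `δ_{2^{s+1} - 1}`. -/
theorem delta_product_odd_multiple (s : ℕ) :
    Odd (∏ r ∈ Finset.Icc 1 s, (2 * (2 ^ r - 1) + 2 * 2 ^ r).choose (2 * 2 ^ r)) ∧
    ∀ (R : Type) [CommRing R] (δ : ℕ → R),
      (∀ i j : ℕ, δ i * δ j = ((2 * i + 2 * j).choose (2 * i)) • δ (i + j)) →
      ∃ c : ℕ, Odd c ∧ ∏ r ∈ Finset.range (s + 1), δ (2 ^ r) = c • δ (2 ^ (s + 1) - 1) :=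
  ⟨odd_twoPowDeltaCoeff s, fun _ _ _ hδ ↦ ⟨_, odd_twoPowDeltaCoeff s, prod_delta_two_pow hδ s⟩⟩
end

section
/- In the graded ring with generators σ_0 = 1, ..., σ_{n-1} and multiplication σ_i σ_j = ([(i+j)/2]! / ([i/2]!·[j/2]!))·σ_{i+j} when i or j is even and i+j ≤ n-1, and σ_i σ_j = 0 if both i, j are odd or i+j > n-1 (the case m even), the longest nontrivial product of elements of positive degree has length ⌊n/2⌋: namely σ_1·σ_2^{k-1} ≠ 0 if n = 2k, and σ_2^k ≠ 0 if n = 2k+1. -/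
/-- In the cohomology ring `H^*(G(S^m; A, A, n); ℤ)` for `m ≥ 2` even — generated
by `σ_0 = 1, σ_1, ..., σ_{n-1}` with `σ_i σ_j = ([(i+j)/2]! / ([i/2]!·[j/2]!)) σ_{i+j}`
when (`i` or `j` is even) and `i + j ≤ n - 1`, and `σ_i σ_j = 0` when both `i, j`
are odd or `i + j > n - 1` — the longest nontrivial product of positive-degree
elements has length `⌊n/2⌋`: namely `σ_1 σ_2^{k-1} ≠ 0` if `n = 2k`, `σ_2^k ≠ 0`
if `n = 2k + 1`, while every product of `⌊n/2⌋ + 1` positive-degree generators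
vanishes. -/
theorem cup_length_m_even (n m : ℕ) (hm : Even m) (hm2 : 2 ≤ m) (hn : 1 ≤ n)
    (R : Type*) [CommRing R] (σ : ℕ → R)
    (hσ0 : σ 0 = 1)
    (hmul : ∀ i j : ℕ, (Even i ∨ Even j) → i + j ≤ n - 1 →
      σ i * σ j = (((i + j) / 2).factorial / ((i / 2).factorial * (j / 2).factorial)) • σ (i + j))
    (hmulodd : ∀ i j : ℕ, Odd i → Odd j → σ i * σ j = 0)
    (hmul0 : ∀ i j : ℕ, n - 1 < i + j → σ i * σ j = 0)
    (hfree : ∀ i ≤ n - 1, ∀ z : ℤ, z • σ i = 0 → z = 0) :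
    (∀ k : ℕ, n = 2 * k → 1 ≤ k → σ 1 * σ 2 ^ (k - 1) ≠ 0) ∧
    (∀ k : ℕ, n = 2 * k + 1 → σ 2 ^ k ≠ 0) ∧
    (∀ f : Fin (n / 2 + 1) → ℕ, (∀ t, 1 ≤ f t ∧ f t ≤ n - 1) → ∏ t, σ (f t) = 0) := by
  -- powers of σ 2
  have hpow : ∀ j : ℕ, 2 * j ≤ n - 1 → σ 2 ^ j = j.factorial • σ (2 * j) := by
    intro j
    induction j with
    | zero => intro _; simp [hσ0]
    | succ j ih =>
      intro hle
      have hle' : 2 * j ≤ n - 1 := by omega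
      have h1 : σ 2 ^ (j + 1) = σ 2 ^ j * σ 2 := pow_succ _ _
      rw [h1, ih hle', smul_mul_assoc, hmul (2 * j) 2 (Or.inl ⟨j, by ring⟩) (by omega)]
      have e1 : (2 * j + 2) / 2 = j + 1 := by omega
      have e2 : (2 * j) / 2 = j := by omega
      have e4 : (2 : ℕ) / 2 = 1 := rfl
      rw [e1, e2, e4, smul_smul]
      congr 1
      · rw [Nat.factorial_one, mul_one, Nat.factorial_succ,
          Nat.mul_div_cancel _ (Nat.factorial_pos j)]
        ring
  constructor
  · -- n = 2k case
    intro k hk hk1 h0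
    have h2 := hpow (k - 1) (by omega)
    rw [h2, mul_smul_comm, hmul 1 (2 * (k - 1)) (Or.inr ⟨k - 1, by ring⟩) (by omega)] at h0
    have e1 : (1 + 2 * (k - 1)) / 2 = k - 1 := by omega
    have e2 : (2 * (k - 1)) / 2 = k - 1 := by omega
    have e3 : (1 : ℕ) / 2 = 0 := by omega
    rw [e1, e2, e3] at h0
    simp only [Nat.factorial_zero, one_mul,
      Nat.div_self (Nat.factorial_pos (k - 1)), one_smul] at h0
    have h4 : ((k - 1).factorial : ℤ) • σ (1 + 2 * (k - 1)) = 0 := by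
      rw [natCast_zsmul]; exact h0
    have := hfree (1 + 2 * (k - 1)) (by omega) _ h4
    exact Nat.factorial_ne_zero (k - 1) (by exact_mod_cast this)
  constructor
  · -- n = 2k+1 case
    intro k hk h0
    have h2 := hpow k (by omega)
    rw [h2] at h0
    have h4 : ((k.factorial : ℤ)) • σ (2 * k) = 0 := by
      rw [natCast_zsmul]; exact h0
    have := hfree (2 * k) (by omega) _ h4
    exact Nat.factorial_ne_zero k (by exact_mod_cast this)
  · -- vanishing of long products
    intro f hf
    -- products over sets of even degrees
    have hA : ∀ s : Finset (Fin (n / 2 + 1)), (∀ t ∈ s, Even (f t)) →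
        (∏ t ∈ s, σ (f t)) = 0 ∨
          ((∑ t ∈ s, f t) ≤ n - 1 ∧ ∃ c : ℕ, (∏ t ∈ s, σ (f t)) = c • σ (∑ t ∈ s, f t)) := by
      intro s
      induction s using Finset.induction_on with
      | empty => intro _; right; exact ⟨Nat.zero_le _, 1, by simp [hσ0]⟩
      | @insert a s ha ih =>
        intro hev
        have hev' : ∀ t ∈ s, Even (f t) := fun t ht => hev t (Finset.mem_insert_of_mem ht)
        rw [Finset.prod_insert ha, Finset.sum_insert ha]
        rcases ih hev' with h0 | ⟨hle, c, hc⟩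
        · left; rw [h0, mul_zero]
        · by_cases hcase : f a + ∑ t ∈ s, f t ≤ n - 1
          · right
            refine ⟨hcase, c * (((f a + ∑ t ∈ s, f t) / 2).factorial /
              ((f a / 2).factorial * ((∑ t ∈ s, f t) / 2).factorial)), ?_⟩
            rw [hc, mul_smul_comm, hmul _ _ (Or.inl (hev a (Finset.mem_insert_self a s))) hcase,
              smul_smul, Nat.mul_comm]
          · left
            rw [hc, mul_smul_comm, hmul0 _ _ (by omega), smul_zero]
    have hge2 : ∀ t, Even (f t) → 2 ≤ f t := by
      intro t ht
      obtain ⟨r, hr⟩ := ht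
      have := (hf t).1
      omega
    set odds := Finset.univ.filter (fun t => Odd (f t)) with hodds
    by_cases htwo : 1 < odds.card
    · -- two odd factors
      obtain ⟨a, ha, b, hb, hab⟩ := Finset.one_lt_card.mp htwo
      have hoa : Odd (f a) := (Finset.mem_filter.mp ha).2
      have hob : Odd (f b) := (Finset.mem_filter.mp hb).2
      rw [← Finset.mul_prod_erase Finset.univ _ (Finset.mem_univ a),
        ← Finset.mul_prod_erase _ _ (Finset.mem_erase.mpr ⟨hab.symm, Finset.mem_univ b⟩),
        ← mul_assoc, hmulodd _ _ hoa hob, zero_mul]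
    · by_cases hone : odds.card = 1
      · -- exactly one odd factor
        obtain ⟨t0, ht0⟩ := Finset.card_eq_one.mp hone
        have hot0 : Odd (f t0) := by
          have : t0 ∈ odds := by rw [ht0]; exact Finset.mem_singleton_self t0
          exact (Finset.mem_filter.mp this).2
        have hev : ∀ t ∈ Finset.univ.erase t0, Even (f t) := by
          intro t ht
          have htne : t ≠ t0 := (Finset.mem_erase.mp ht).1
          by_contra hcon
          have : t ∈ odds := Finset.mem_filter.mpr ⟨Finset.mem_univ t,
            Nat.not_even_iff_odd.mp hcon⟩
          rw [ht0, Finset.mem_singleton] at this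
          exact htne this
        rw [← Finset.mul_prod_erase Finset.univ _ (Finset.mem_univ t0)]
        rcases hA _ hev with h0 | ⟨hle, c, hc⟩
        · rw [h0, mul_zero]
        · -- sum over erase is at least 2 * (n/2)
          have hsum : 2 * (n / 2) ≤ ∑ t ∈ Finset.univ.erase t0, f t := by
            calc 2 * (n / 2) = ∑ _t ∈ Finset.univ.erase t0, 2 := by
                  rw [Finset.sum_const, Finset.card_erase_of_mem (Finset.mem_univ t0),
                    Finset.card_univ, Fintype.card_fin]
                  simp [Nat.mul_comm]
              _ ≤ _ := Finset.sum_le_sum (fun t ht => hge2 t (hev t ht))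
          have h1 : 1 ≤ f t0 := (hf t0).1
          rw [hc, mul_smul_comm, hmul0 _ _ (by omega), smul_zero]
      · -- no odd factors
        have hcard0 : odds.card = 0 := by omega
        have hev : ∀ t ∈ (Finset.univ : Finset (Fin (n / 2 + 1))), Even (f t) := by
          intro t _
          by_contra hcon
          have : t ∈ odds := Finset.mem_filter.mpr ⟨Finset.mem_univ t,
            Nat.not_even_iff_odd.mp hcon⟩
          simp [Finset.card_eq_zero.mp hcard0] at this
        rcases hA _ hev with h0 | ⟨hle, c, hc⟩
        · exact h0
        · exfalso
          have hsum : 2 * (n / 2 + 1) ≤ ∑ t, f t := by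
            calc 2 * (n / 2 + 1) = ∑ _t : Fin (n / 2 + 1), 2 := by
                  rw [Finset.sum_const, Finset.card_univ, Fintype.card_fin]
                  simp [Nat.mul_comm]
              _ ≤ _ := Finset.sum_le_sum (fun t ht => hge2 t (hev t ht))
          omega
end

section
/- In the ring with relation σ_2i σ_2j = C(i+j, i)·σ_{2(i+j)} for i+j ≤ (n-3)/2 and 0 otherwise, together with an element w of odd degree with w² = 0, the product σ_2^{(n-3)/2}·w is nonzero (it equals ((n-3)/2)!·σ_{n-3}·w); hence the cup-length is at least (n-1)/2. -/
/-- In the (char ≠ 2) cohomology ring of the cyclic configuration space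
`G(S^m, n)` for `m` even and `n` odd — with generators `w` (degree `2m-1`,
`w² = 0`) and `σ_{2i}` (degree `2i(m-1)`, `i = 1, ..., (n-3)/2`) satisfying
`σ_{2i} σ_{2j} = C(i+j, i) σ_{2(i+j)}` for `i + j ≤ (n-3)/2` and `0` otherwise —
the product `σ_2^{(n-3)/2} · w` equals `((n-3)/2)! · σ_{n-3} · w` and is nonzero;
hence the cup-length is at least `(n-1)/2`. -/
theorem sigma_two_pow_mul_w (n m : ℕ) (hm : Even m) (hm2 : 2 ≤ m)
    (hn : Odd n) (hn3 : 3 ≤ n)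
    (R : Type*) [CommRing R] (σ2 : ℕ → R) (w : R)
    (hσ0 : σ2 0 = 1) (hw : w ^ 2 = 0)
    (hmul : ∀ i j : ℕ, i + j ≤ (n - 3) / 2 → σ2 i * σ2 j = ((i + j).choose i) • σ2 (i + j))
    (hmul0 : ∀ i j : ℕ, (n - 3) / 2 < i + j → σ2 i * σ2 j = 0)
    (hfree : ∀ z : ℤ, z • (σ2 ((n - 3) / 2) * w) = 0 → z = 0) :
    σ2 1 ^ ((n - 3) / 2) * w = ((n - 3) / 2).factorial • (σ2 ((n - 3) / 2) * w) ∧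
    σ2 1 ^ ((n - 3) / 2) * w ≠ 0 := by
  set N := (n - 3) / 2 with hN
  have key : ∀ k, k ≤ N → σ2 1 ^ k = k.factorial • σ2 k := by
    intro k
    induction k with
    | zero => intro _; simp [hσ0]
    | succ k ih =>
      intro hk
      have hkN : k ≤ N := Nat.le_of_succ_le hk
      have h1 : k + 1 ≤ N := hk
      rw [pow_succ, ih hkN, smul_mul_assoc, hmul k 1 h1]
      rw [smul_smul, Nat.choose_succ_self_right, Nat.factorial_succ, Nat.mul_comm]
  have heq : σ2 1 ^ N * w = N.factorial • (σ2 N * w) := by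
    rw [key N le_rfl, smul_mul_assoc]
  refine ⟨heq, ?_⟩
  intro h
  rw [heq] at h
  have : ((N.factorial : ℤ)) • (σ2 N * w) = 0 := by
    simpa using h
  have := hfree _ this
  exact absurd (by exact_mod_cast this) (Nat.factorial_ne_zero N)
end

section
/- For m ≥ 2 and n ≥ 1, the inclusion G(S^m; A, B, n−1) ↪ G(S^m; A, A, n) (obtained as the fiber of the fibration sending (x_1,...,x_n) to x_n over the contractible base S^m − {A}) is a homotopy equivalence. -/
/-!
Stereographic projection `σ` from `A` identifies `S^m` with the one-point compactification of a
hyperplane `H`, with `A` as the point at infinity. Translations of `H` therefore extend to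
homeomorphisms of `S^m` fixing `A`, depending continuously on the translation vector. Translating
every point of a chain `x` by `t • (σ B - σ x_n)` keeps it in `G(S^m; A, A, n)`, moves `x_n`
to `B` at `t = 1`, and does nothing to chains that already end at `B`: a deformation retraction of
`G(S^m; A, A, n)` onto the fibre `G(S^m; A, B, n - 1)`.
-/

open Filter Topology Metric

theorem tendsto_add_nhds_prod_cocompact {G : Type*} [AddGroup G] [TopologicalSpace G]
    [IsTopologicalAddGroup G] [LocallyCompactSpace G] (a : G) :
    Tendsto (fun q : G × G => q.2 + q.1) (𝓝 a ×ˢ cocompact G) (cocompact G) := by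
  refine hasBasis_cocompact.tendsto_right_iff.2 fun K hK => ?_
  obtain ⟨N, hNc, hN⟩ := exists_compact_mem_nhds a
  filter_upwards [prod_mem_prod hN ((hK.prod hNc).image continuous_sub).compl_mem_cocompact]
  rintro ⟨b, z⟩ ⟨hb, hz⟩ hzb
  exact hz ⟨(z + b, b), ⟨hzb, hb⟩, add_sub_cancel_right z b⟩

namespace OnePoint

theorem continuous_map_add_right {G : Type*} [AddGroup G] [TopologicalSpace G]
    [IsTopologicalAddGroup G] [LocallyCompactSpace G] :
    Continuous fun q : G × OnePoint G => q.2.map (· + q.1) := by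
  refine continuous_iff_continuousAt.2 fun ⟨a, x⟩ => ?_
  induction x using OnePoint.rec with
  | infty =>
    rw [ContinuousAt, nhds_prod_eq, nhds_infty_eq, prod_sup, prod_map_right, prod_pure,
      tendsto_sup, tendsto_map'_iff, tendsto_map'_iff]
    refine ⟨tendsto_coe_infty.comp (f := fun q : G × G => q.2 + q.1) ?_, tendsto_const_nhds⟩
    rw [coclosedCompact_eq_cocompact]
    exact tendsto_add_nhds_prod_cocompact a
  | coe z =>
    exact ((IsOpenEmbedding.id.prodMap isOpenEmbedding_coe).continuousAt_iff
      (g := fun q : G × OnePoint G => q.2.map (· + q.1)) (x := (a, z))).1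
      (continuous_coe.comp (continuous_snd.add continuous_fst)).continuousAt

end OnePoint

variable {E : Type*} [NormedAddCommGroup E] [InnerProductSpace ℝ E] [FiniteDimensional ℝ E]

theorem onePointHyperplaneHomeoUnitSphere_symm_apply {v : E} (hv : ‖v‖ = 1)
    {x : sphere (0 : E) 1} (hx : x ∈ (stereographic hv).source) :
    (onePointHyperplaneHomeoUnitSphere hv).symm x = stereographic hv x :=
  (Homeomorph.symm_apply_eq _).2 ((stereographic hv).left_inv hx).symm

theorem onePointHyperplaneHomeoUnitSphere_symm_apply_self (v : sphere (0 : E) 1) :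
    (onePointHyperplaneHomeoUnitSphere (norm_eq_of_mem_sphere v)).symm v = OnePoint.infty :=
  (Homeomorph.symm_apply_eq _).2 rfl

noncomputable def stereoTranslate (A : sphere (0 : E) 1) (a : (ℝ ∙ (A : E))ᗮ) :
    sphere (0 : E) 1 ≃ₜ sphere (0 : E) 1 :=
  (onePointHyperplaneHomeoUnitSphere (norm_eq_of_mem_sphere A)).symm.trans <|
    (Homeomorph.addRight a).onePointCongr.trans
      (onePointHyperplaneHomeoUnitSphere (norm_eq_of_mem_sphere A))

section StereoTranslate

variable (A : sphere (0 : E) 1)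

theorem stereoTranslate_apply_self (a : (ℝ ∙ (A : E))ᗮ) : stereoTranslate A a A = A := by
  simp only [stereoTranslate, Homeomorph.trans_apply, Homeomorph.onePointCongr_apply,
    onePointHyperplaneHomeoUnitSphere_symm_apply_self, OnePoint.map_infty]
  rfl

theorem stereoTranslate_apply_of_ne (a : (ℝ ∙ (A : E))ᗮ) {x : sphere (0 : E) 1}
    (hx : x ≠ A) :
    stereoTranslate A a x = (stereographic (norm_eq_of_mem_sphere A)).symm
      (stereographic (norm_eq_of_mem_sphere A) x + a) := by
  simp only [stereoTranslate, Homeomorph.trans_apply, Homeomorph.onePointCongr_apply,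
    onePointHyperplaneHomeoUnitSphere_symm_apply _ hx, Homeomorph.coe_addRight, OnePoint.map_some]
  rfl

theorem stereoTranslate_zero_apply (x : sphere (0 : E) 1) : stereoTranslate A 0 x = x := by
  simp only [stereoTranslate, Homeomorph.trans_apply, Homeomorph.onePointCongr_apply,
    OnePoint.map, Homeomorph.coe_addRight, add_zero, Option.map_id_fun']
  exact (onePointHyperplaneHomeoUnitSphere (norm_eq_of_mem_sphere A)).apply_symm_apply x

theorem stereoTranslate_sub {x y : sphere (0 : E) 1} (hx : x ≠ A) (hy : y ≠ A) :
    stereoTranslate A (stereographic (norm_eq_of_mem_sphere A) y -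
      stereographic (norm_eq_of_mem_sphere A) x) x = y := by
  rw [stereoTranslate_apply_of_ne A _ hx, add_sub_cancel, (stereographic _).left_inv hy]

theorem continuous_stereoTranslate :
    Continuous fun q : (ℝ ∙ (A : E))ᗮ × sphere (0 : E) 1 => stereoTranslate A q.1 q.2 :=
  (onePointHyperplaneHomeoUnitSphere _).continuous.comp <|
    OnePoint.continuous_map_add_right.comp
      (continuous_fst.prodMk
        ((onePointHyperplaneHomeoUnitSphere _).symm.continuous.comp continuous_snd))

end StereoTranslate

section Configuration

variable {S : Type*} (A B : S) (n : ℕ)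

/-- `G(S; A, B, n - 1)` -/
abbrev FiberConfig : Type _ :=
  {y : Fin (n - 1) → S //
    (∀ h : 0 < n - 1, y ⟨0, h⟩ ≠ A) ∧
    (∀ h : 0 < n - 1, y ⟨n - 2, Nat.sub_one_lt (Nat.pos_iff_ne_zero.mp h)⟩ ≠ B) ∧
    (∀ i : ℕ, ∀ h : i + 1 < n - 1, y ⟨i, Nat.lt_of_succ_lt h⟩ ≠ y ⟨i + 1, h⟩)}

/-- `G(S; A, A, n)` -/
abbrev TotalConfig [NeZero n] : Type _ :=
  {x : Fin n → S //
    x ⟨0, Nat.pos_of_neZero n⟩ ≠ A ∧ x ⟨n - 1, Nat.sub_one_lt (NeZero.ne n)⟩ ≠ A ∧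
    (∀ i : ℕ, ∀ h : i + 1 < n, x ⟨i, Nat.lt_of_succ_lt h⟩ ≠ x ⟨i + 1, h⟩)}

variable {A B n} [NeZero n]

namespace TotalConfig

def last (x : TotalConfig A n) : S := x.1 ⟨n - 1, Nat.sub_one_lt (NeZero.ne n)⟩

def map (f : S → S) (hf : Function.Injective f) (hfA : f A = A) (x : TotalConfig A n) :
    TotalConfig A n :=
  ⟨f ∘ x.1, (hf.ne_iff' hfA).2 x.2.1, (hf.ne_iff' hfA).2 x.2.2.1,
    fun i h => hf.ne (x.2.2.2 i h)⟩

def init (x : TotalConfig A n) (hx : x.last = B) : FiberConfig A B n := by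
  refine ⟨fun i => x.1 ⟨i, by omega⟩, fun _ => x.2.1, fun h => ?_,
    fun i h => x.2.2.2 i (by omega)⟩
  rw [← hx, last]
  convert x.2.2.2 (n - 2) (by omega) using 3
  omega

variable [TopologicalSpace S]

theorem continuous_last : Continuous (last : TotalConfig A n → S) :=
  (continuous_apply _).comp continuous_subtype_val

theorem _root_.Continuous.totalConfigInit {X : Type*} [TopologicalSpace X]
    {f : X → TotalConfig A n} (hf : Continuous f) (hfB : ∀ z, (f z).last = B) :
    Continuous fun z => (f z).init (hfB z) :=
  (continuous_pi fun _ => (continuous_apply _).comp (continuous_subtype_val.comp hf)).subtype_mk _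

end TotalConfig

namespace FiberConfig

def snoc (hBA : B ≠ A) (y : FiberConfig A B n) : TotalConfig A n := by
  refine ⟨fun i => if h : (i : ℕ) < n - 1 then y.1 ⟨i, h⟩ else B, ?_, ?_, fun i h => ?_⟩
  · by_cases h : 0 < n - 1 <;> simp [h, y.2.1, hBA]
  · simpa using hBA
  · by_cases h' : i + 1 < n - 1
    · simpa [h', Nat.lt_of_succ_lt h'] using y.2.2.2 i h'
    · have hi : i = n - 2 := by omega
      subst hi
      simpa [h', show n - 2 < n - 1 by omega] using y.2.2.1 (by omega)

theorem last_snoc (hBA : B ≠ A) (y : FiberConfig A B n) :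
    (y.snoc hBA : TotalConfig A n).last = B := by
  simp [snoc, TotalConfig.last]

theorem init_snoc (hBA : B ≠ A) (y : FiberConfig A B n) :
    (y.snoc hBA : TotalConfig A n).init (last_snoc hBA y) = y := by
  ext i
  simp [snoc, TotalConfig.init]

theorem _root_.TotalConfig.snoc_init (hBA : B ≠ A) (x : TotalConfig A n) (hx : x.last = B) :
    (x.init hx).snoc hBA = x := by
  ext i
  by_cases h : (i : ℕ) < n - 1
  · simp [snoc, TotalConfig.init, h]
  · have hi : i = ⟨n - 1, by omega⟩ := Fin.ext (show (i : ℕ) = n - 1 by omega)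
    simp [snoc, hi, ← hx, TotalConfig.last]

variable [TopologicalSpace S]

theorem continuous_snoc (hBA : B ≠ A) :
    Continuous (snoc hBA : FiberConfig A B n → TotalConfig A n) := by
  refine (continuous_pi fun i => ?_).subtype_mk _
  by_cases h : (i : ℕ) < n - 1
  · simp only [dif_pos h]
    exact (continuous_apply _).comp continuous_subtype_val
  · simp only [dif_neg h]
    exact continuous_const

def inclusion (hBA : B ≠ A) : C(FiberConfig A B n, TotalConfig A n) :=
  ⟨snoc hBA, continuous_snoc hBA⟩

end FiberConfig

end Configuration

section Push

open ContinuousMap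

variable {A : sphere (0 : E) 1} (B : sphere (0 : E) 1) {n : ℕ} [NeZero n]

namespace TotalConfig

noncomputable def pushVector (x : TotalConfig A n) : (ℝ ∙ (A : E))ᗮ :=
  stereographic (norm_eq_of_mem_sphere A) B - stereographic (norm_eq_of_mem_sphere A) x.last

noncomputable def push (t : ℝ) (x : TotalConfig A n) : TotalConfig A n :=
  x.map (stereoTranslate A (t • pushVector B x)) (Homeomorph.injective _)
    (stereoTranslate_apply_self _ _)

theorem continuous_push : Continuous fun p : ℝ × TotalConfig A n => push B p.1 p.2 := by
  have continuous_pushVector : Continuous (pushVector B : TotalConfig A n → _) :=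
    continuous_const.sub <| (stereographic _).continuousOn.comp_continuous
      continuous_last fun x => x.2.2.1
  exact (continuous_pi fun i => (continuous_stereoTranslate A).comp
    ((continuous_fst.smul (continuous_pushVector.comp continuous_snd)).prodMk
      ((continuous_apply i).comp (continuous_subtype_val.comp continuous_snd)))).subtype_mk _

theorem push_zero (x : TotalConfig A n) : push B 0 x = x := by
  ext i
  simp [push, map, stereoTranslate_zero_apply]

theorem push_of_last_eq {x : TotalConfig A n} (hx : x.last = B) (t : ℝ) : push B t x = x := by
  ext i
  simp [push, map, pushVector, hx, stereoTranslate_zero_apply]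

theorem last_push_one (hBA : B ≠ A) (x : TotalConfig A n) : (push B 1 x).last = B := by
  simp only [push, map, last, one_smul, pushVector]
  exact stereoTranslate_sub A x.2.2.1 hBA

end TotalConfig

open TotalConfig

noncomputable def fiberRetraction (hBA : B ≠ A) : C(TotalConfig A n, FiberConfig A B n) :=
  ⟨fun x => (push B 1 x).init (last_push_one B hBA x),
    ((continuous_push B).comp (Continuous.prodMk_right 1)).totalConfigInit _⟩

theorem fiberRetraction_comp_inclusion (hBA : B ≠ A) :
    (fiberRetraction B hBA).comp (FiberConfig.inclusion hBA) =
      ContinuousMap.id (FiberConfig A B n) := by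
  ext y : 1
  change (push B 1 (y.snoc hBA)).init (last_push_one B hBA _) = y
  simp only [push_of_last_eq B (FiberConfig.last_snoc hBA y), FiberConfig.init_snoc]

noncomputable def pushHomotopy (hBA : B ≠ A) :
    Homotopy (ContinuousMap.id (TotalConfig A n))
      ((FiberConfig.inclusion hBA).comp (fiberRetraction B hBA)) where
  toFun p := push B p.1 p.2
  continuous_toFun := (continuous_push B).comp
    (f := fun p : unitInterval × TotalConfig A n => ((p.1 : ℝ), p.2)) (by fun_prop)
  map_zero_left := push_zero B
  map_one_left x := (snoc_init hBA _ (last_push_one B hBA x)).symm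

noncomputable def fiberInclusionHomotopyEquiv (hBA : B ≠ A) :
    HomotopyEquiv (FiberConfig A B n) (TotalConfig A n) where
  toFun := FiberConfig.inclusion hBA
  invFun := fiberRetraction B hBA
  left_inv := by rw [fiberRetraction_comp_inclusion]
  right_inv := .symm ⟨pushHomotopy B hBA⟩

end Push

/-- For `m ≥ 2` and `n ≥ 1`, the inclusion `G(S^m; A, B, n−1) ↪ G(S^m; A, A, n)`
obtained as the fiber over `B` of the fibration `(x_1,...,x_n) ↦ x_n` over the
contractible base `S^m − {A}` (i.e. `(x_1,...,x_{n-1}) ↦ (x_1,...,x_{n-1}, B)`)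
is a homotopy equivalence. -/
theorem inclusion_homotopy_equiv (m n : ℕ) (hn : 1 ≤ n)
    (A B : Metric.sphere (0 : EuclideanSpace ℝ (Fin (m + 1))) 1) (hAB : A ≠ B) :
    ∃ e : ContinuousMap.HomotopyEquiv
      {y : Fin (n - 1) → Metric.sphere (0 : EuclideanSpace ℝ (Fin (m + 1))) 1 //
        (∀ h : 0 < n - 1, y ⟨0, h⟩ ≠ A) ∧
        (∀ h : 0 < n - 1, y ⟨n - 2, by omega⟩ ≠ B) ∧
        (∀ i : ℕ, ∀ h : i + 1 < n - 1, y ⟨i, by omega⟩ ≠ y ⟨i + 1, h⟩)}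
      {x : Fin n → Metric.sphere (0 : EuclideanSpace ℝ (Fin (m + 1))) 1 //
        x ⟨0, by omega⟩ ≠ A ∧ x ⟨n - 1, by omega⟩ ≠ A ∧
        (∀ i : ℕ, ∀ h : i + 1 < n, x ⟨i, by omega⟩ ≠ x ⟨i + 1, h⟩)},
      ∀ y, ∀ i : Fin n,
        ((e.toFun y).1 i) = if h : (i : ℕ) < n - 1 then y.1 ⟨i, h⟩ else B :=
  have : NeZero n := ⟨by omega⟩
  ⟨fiberInclusionHomotopyEquiv B hAB.symm, fun _ _ => rfl⟩
end

section
/- For m odd, the fibration p: G(S^m, n) → S^m given by p(x_1,...,x_n) = x_1 admits a continuous section: choosing a nowhere-vanishing tangent vector field V on S^m, the map s(x) = (x_1,...,x_n) with x_j = cos((j−1)π/(n−1))·x + sin((j−1)π/(n−1))·V(x) is a well-defined continuous section, i.e., the points x_j lie on S^m, are pairwise-consecutively distinct, and x_n ≠ x_1. -/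
open Real
open scoped RealInnerProductSpace

/-! The points `x_j` lie on the great semicircle from `x` to `-x` through `V x`, at the angles
`θ_j = (j - 1) π / (n - 1) ∈ [0, π]`. Since `x ⊥ V x`, the component along `x` is `cos θ_j`,
and `cos` is injective on `[0, π]`; so consecutive points differ, and `x_n = -x ≠ x = x_1`. -/

section Orthonormal

variable {E : Type*} [NormedAddCommGroup E] [InnerProductSpace ℝ E] {x v : E}

theorem inner_smul_add_smul_of_orthonormal (hx : ‖x‖ = 1) (hperp : ⟪x, v⟫ = 0) (a b : ℝ) :
    ⟪x, a • x + b • v⟫ = a := by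
  rw [inner_add_right, real_inner_smul_right, real_inner_smul_right,
    real_inner_self_eq_norm_sq, hx, hperp]
  ring

theorem norm_cos_smul_add_sin_smul (hx : ‖x‖ = 1) (hv : ‖v‖ = 1) (hperp : ⟪x, v⟫ = 0)
    (θ : ℝ) : ‖cos θ • x + sin θ • v‖ = 1 := by
  have hsq : ‖cos θ • x + sin θ • v‖ ^ 2 = 1 := by
    rw [norm_add_sq_real, real_inner_smul_left, real_inner_smul_right, hperp, norm_smul,
      norm_smul, hx, hv, Real.norm_eq_abs, Real.norm_eq_abs]
    nlinarith [sin_sq_add_cos_sq θ, sq_abs (cos θ), sq_abs (sin θ)]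
  exact (pow_eq_one_iff_of_nonneg (norm_nonneg _) two_ne_zero).1 hsq

theorem cos_eq_of_cos_smul_add_sin_smul_eq (hx : ‖x‖ = 1) (hperp : ⟪x, v⟫ = 0) {θ φ : ℝ}
    (h : cos θ • x + sin θ • v = cos φ • x + sin φ • v) : cos θ = cos φ := by
  simpa only [inner_smul_add_smul_of_orthonormal hx hperp] using congrArg (⟪x, ·⟫) h

end Orthonormal

theorem eq_of_cos_mul_pi_div_eq {a b N : ℝ} (hN : 0 < N) (ha : a ∈ Set.Icc 0 N)
    (hb : b ∈ Set.Icc 0 N) (h : cos (a * π / N) = cos (b * π / N)) : a = b := by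
  have mem {c : ℝ} (hc : c ∈ Set.Icc 0 N) : c * π / N ∈ Set.Icc 0 π := by
    constructor
    · have := hc.1; positivity
    · rw [div_le_iff₀ hN]; nlinarith [pi_pos, hc.2]
  have := injOn_cos (mem ha) (mem hb) h
  field_simp at this
  nlinarith [pi_pos]

theorem section_of_cyclic_fibration_general (m n : ℕ) (hn : 2 ≤ n)
    (V : EuclideanSpace ℝ (Fin (m + 1)) → EuclideanSpace ℝ (Fin (m + 1)))
    (hV : Continuous V)
    (x : EuclideanSpace ℝ (Fin (m + 1))) (hx : ‖x‖ = 1)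
    (hVx : ‖V x‖ = 1) (hperp : ⟪x, V x⟫ = 0) :
    (∀ j : ℕ, 1 ≤ j → j ≤ n →
      ‖Real.cos (((j : ℝ) - 1) * π / ((n : ℝ) - 1)) • x +
        Real.sin (((j : ℝ) - 1) * π / ((n : ℝ) - 1)) • V x‖ = 1) ∧
    (∀ j : ℕ, 1 ≤ j → j + 1 ≤ n →
      Real.cos (((j : ℝ) - 1) * π / ((n : ℝ) - 1)) • x +
        Real.sin (((j : ℝ) - 1) * π / ((n : ℝ) - 1)) • V x ≠
      Real.cos ((((j : ℝ) + 1) - 1) * π / ((n : ℝ) - 1)) • x +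
        Real.sin ((((j : ℝ) + 1) - 1) * π / ((n : ℝ) - 1)) • V x) ∧
    (Real.cos (((n : ℝ) - 1) * π / ((n : ℝ) - 1)) • x +
        Real.sin (((n : ℝ) - 1) * π / ((n : ℝ) - 1)) • V x ≠
      Real.cos (((1 : ℝ) - 1) * π / ((n : ℝ) - 1)) • x +
        Real.sin (((1 : ℝ) - 1) * π / ((n : ℝ) - 1)) • V x) ∧
    (∀ j : ℕ, Continuous fun z : EuclideanSpace ℝ (Fin (m + 1)) =>
      Real.cos (((j : ℝ) - 1) * π / ((n : ℝ) - 1)) • z +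
        Real.sin (((j : ℝ) - 1) * π / ((n : ℝ) - 1)) • V z) := by
  have hn1 : (1 : ℝ) ≤ n - 1 := by
    have : (2 : ℝ) ≤ n := by exact_mod_cast hn
    linarith
  refine ⟨fun j _ _ => norm_cos_smul_add_sin_smul hx hVx hperp _, ?_, ?_, fun j => by fun_prop⟩
  · intro j hj hjn h
    have hj' : (1 : ℝ) ≤ j := by exact_mod_cast hj
    have hjn' : (j : ℝ) + 1 ≤ n := by exact_mod_cast hjn
    have := eq_of_cos_mul_pi_div_eq (by linarith) ⟨by linarith, by linarith⟩
      ⟨by linarith, by linarith⟩ (cos_eq_of_cos_smul_add_sin_smul_eq hx hperp h)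
    linarith
  · intro h
    have := cos_eq_of_cos_smul_add_sin_smul_eq hx hperp h
    rw [mul_div_cancel_left₀ π (by linarith), sub_self, zero_mul, zero_div, cos_pi,
      cos_zero] at this
    norm_num at this

/-- For `m` odd, the fibration `p : G(S^m, n) → S^m`, `p(x_1,...,x_n) = x_1`,
admits a continuous section: given a continuous nowhere-vanishing (unit,
tangent) vector field `V` on `S^m`, the formula
`x_j = cos((j−1)π/(n−1)) x + sin((j−1)π/(n−1)) V(x)` defines points on the
sphere which are pairwise-consecutively distinct with `x_n ≠ x_1`, and each
depends continuously on `x`. -/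
theorem section_of_cyclic_fibration (m n : ℕ) (hm : Odd m) (hn : 2 ≤ n)
    (V : EuclideanSpace ℝ (Fin (m + 1)) → EuclideanSpace ℝ (Fin (m + 1)))
    (hV : Continuous V)
    (x : EuclideanSpace ℝ (Fin (m + 1))) (hx : ‖x‖ = 1)
    (hVx : ‖V x‖ = 1) (hperp : ⟪x, V x⟫ = 0) :
    (∀ j : ℕ, 1 ≤ j → j ≤ n →
      ‖Real.cos (((j : ℝ) - 1) * π / ((n : ℝ) - 1)) • x +
        Real.sin (((j : ℝ) - 1) * π / ((n : ℝ) - 1)) • V x‖ = 1) ∧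
    (∀ j : ℕ, 1 ≤ j → j + 1 ≤ n →
      Real.cos (((j : ℝ) - 1) * π / ((n : ℝ) - 1)) • x +
        Real.sin (((j : ℝ) - 1) * π / ((n : ℝ) - 1)) • V x ≠
      Real.cos ((((j : ℝ) + 1) - 1) * π / ((n : ℝ) - 1)) • x +
        Real.sin ((((j : ℝ) + 1) - 1) * π / ((n : ℝ) - 1)) • V x) ∧
    (Real.cos (((n : ℝ) - 1) * π / ((n : ℝ) - 1)) • x +
        Real.sin (((n : ℝ) - 1) * π / ((n : ℝ) - 1)) • V x ≠
      Real.cos (((1 : ℝ) - 1) * π / ((n : ℝ) - 1)) • x +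
        Real.sin (((1 : ℝ) - 1) * π / ((n : ℝ) - 1)) • V x) ∧
    (∀ j : ℕ, Continuous fun z : EuclideanSpace ℝ (Fin (m + 1)) =>
      Real.cos (((j : ℝ) - 1) * π / ((n : ℝ) - 1)) • z +
        Real.sin (((j : ℝ) - 1) * π / ((n : ℝ) - 1)) • V z) :=
  section_of_cyclic_fibration_general m n hn V hV x hx hVx hperp
end

section
/- For k = 1,...,[(n+1)/2], the configuration (x_1,...,x_n) with x_j = cos(jψ_k)·A + sin(jψ_k)·a, where ψ_k = 2πk/(n+1) and a ⊥ A are orthonormal vectors in ℝ^{m+1}, is a critical point of the length function L(x_1,...,x_n) = −∑_{i=0}^n |x_i − x_{i+1}| (with x_0 = x_{n+1} = A) on the unit sphere S^m: at each x_j the reflection law holds, i.e., the angle of incidence equals the angle of reflection. -/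
open Real
open scoped RealInnerProductSpace

/-- For `k = 1, ..., [(n+1)/2]`, the configuration `x_j = cos(jψ_k) A + sin(jψ_k) a`
(`ψ_k = 2πk/(n+1)`, `a ⊥ A` orthonormal in `ℝ^{m+1}`) is a billiard configuration on
the unit sphere `S^m`: it starts and ends at `A` (`x_0 = x_{n+1} = A`), lies on the
sphere, has distinct consecutive points, and at each reflection point `x_j`
(`j = 1, ..., n`) the reflection law holds — the sum of the unit chord directions
`(x_j − x_{j−1})/|x_j − x_{j−1}| + (x_j − x_{j+1})/|x_j − x_{j+1}|` is proportional
to `x_j`; i.e. it is a critical point of the total length function. -/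
theorem sphere_billiard_critical (m n k : ℕ) (hn : 1 ≤ n) (hk1 : 1 ≤ k)
    (hk2 : 2 * k ≤ n + 1)
    (A a : EuclideanSpace ℝ (Fin (m + 1))) (hA : ‖A‖ = 1) (ha : ‖a‖ = 1)
    (hperp : ⟪A, a⟫ = 0)
    (x : ℕ → EuclideanSpace ℝ (Fin (m + 1)))
    (hx : ∀ j : ℕ, x j = Real.cos ((j : ℝ) * (2 * π * k / ((n : ℝ) + 1))) • A +
      Real.sin ((j : ℝ) * (2 * π * k / ((n : ℝ) + 1))) • a) :
    x 0 = A ∧ x (n + 1) = A ∧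
    (∀ j ≤ n + 1, ‖x j‖ = 1) ∧
    (∀ j ≤ n, x j ≠ x (j + 1)) ∧
    (∀ j : ℕ, 1 ≤ j → j ≤ n → ∃ c : ℝ,
      ‖x j - x (j - 1)‖⁻¹ • (x j - x (j - 1)) + ‖x j - x (j + 1)‖⁻¹ • (x j - x (j + 1)) =
        c • x j) := by
  set ψ : ℝ := 2 * π * k / ((n : ℝ) + 1) with hψ
  have hn1 : (0:ℝ) < (n:ℝ) + 1 := by positivity
  have hψpos : 0 < ψ := by
    have : (0:ℝ) < (k:ℝ) := by exact_mod_cast hk1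
    have := Real.pi_pos
    positivity
  have hψle : ψ ≤ π := by
    rw [hψ, div_le_iff₀ hn1]
    have h2k : (2:ℝ) * k ≤ (n:ℝ) + 1 := by exact_mod_cast hk2
    nlinarith [Real.pi_pos]
  have hsinpos : 0 < Real.sin (ψ / 2) := by
    apply Real.sin_pos_of_pos_of_lt_pi (by linarith)
    linarith [Real.pi_pos]
  have hcos : Real.cos ψ < 1 := by
    refine lt_of_le_of_ne (Real.cos_le_one ψ) ?_
    intro h
    have := (Real.cos_eq_one_iff_of_lt_of_lt (by linarith [Real.pi_pos]) (by linarith [Real.pi_pos])).mp h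
    linarith
  -- norm of p • A + q • a
  have hnorm : ∀ p q : ℝ, ‖p • A + q • a‖ ^ 2 = p ^ 2 + q ^ 2 := by
    intro p q
    rw [norm_add_sq_real, inner_smul_left, inner_smul_right]
    rw [norm_smul, norm_smul, hA, ha, hperp]
    simp [mul_pow, sq_abs]
  -- difference norm
  have hdiff : ∀ i : ℕ, ‖x (i + 1) - x i‖ = Real.sqrt (2 - 2 * Real.cos ψ) := by
    intro i
    have e : x (i + 1) - x i =
        (Real.cos (((i:ℝ) + 1) * ψ) - Real.cos ((i:ℝ) * ψ)) • A +
        (Real.sin (((i:ℝ) + 1) * ψ) - Real.sin ((i:ℝ) * ψ)) • a := by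
      rw [hx (i + 1), hx i]
      push_cast
      rw [sub_smul, sub_smul]
      abel
    rw [e]
    have h2 : ‖(Real.cos (((i:ℝ) + 1) * ψ) - Real.cos ((i:ℝ) * ψ)) • A +
        (Real.sin (((i:ℝ) + 1) * ψ) - Real.sin ((i:ℝ) * ψ)) • a‖ ^ 2
        = 2 - 2 * Real.cos ψ := by
      rw [hnorm]
      have e1 : ((i:ℝ) + 1) * ψ = (i:ℝ) * ψ + ψ := by ring
      rw [e1, Real.cos_add, Real.sin_add]
      nlinarith [Real.sin_sq_add_cos_sq ((i:ℝ) * ψ), Real.sin_sq_add_cos_sq ψ]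
    rw [← h2]
    rw [Real.sqrt_sq (norm_nonneg _)]
  have hLpos : 0 < Real.sqrt (2 - 2 * Real.cos ψ) := Real.sqrt_pos.mpr (by linarith)
  refine ⟨?_, ?_, ?_, ?_, ?_⟩
  · rw [hx 0]; simp
  · rw [hx (n + 1)]
    have : ((n:ℝ) + 1) * ψ = 2 * π * k := by
      rw [hψ]; field_simp
    push_cast
    rw [this]
    have e2 : (k:ℝ) * (2 * π) = ((2 * k : ℕ) : ℝ) * π := by push_cast; ring
    rw [mul_comm (2 * π) (k:ℝ), Real.cos_nat_mul_two_pi, e2, Real.sin_nat_mul_pi]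
    simp
  · intro j _
    rw [hx j]
    have h := hnorm (Real.cos ((j:ℝ) * ψ)) (Real.sin ((j:ℝ) * ψ))
    have hpyth : Real.cos ((j:ℝ) * ψ) ^ 2 + Real.sin ((j:ℝ) * ψ) ^ 2 = 1 := by
      rw [add_comm]; exact Real.sin_sq_add_cos_sq _
    nlinarith [norm_nonneg (Real.cos ((j:ℝ) * ψ) • A + Real.sin ((j:ℝ) * ψ) • a)]
  · intro j _ h
    have := hdiff j
    rw [← h] at this
    simp at this
    linarith
  · intro j hj1 hj2
    obtain ⟨i, rfl⟩ : ∃ i, j = i + 1 := ⟨j - 1, (Nat.succ_pred_eq_of_pos hj1).symm⟩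
    have hsub : i + 1 - 1 = i := rfl
    rw [hsub]
    -- key reflection identity
    have key : x i + x (i + 2) = (2 * Real.cos ψ) • x (i + 1) := by
      rw [hx i, hx (i + 2), hx (i + 1)]
      push_cast
      have hc : Real.cos ((i:ℝ) * ψ) + Real.cos (((i:ℝ) + 2) * ψ)
          = 2 * Real.cos ψ * Real.cos (((i:ℝ) + 1) * ψ) := by
        have e1 : (i:ℝ) * ψ = ((i:ℝ) + 1) * ψ - ψ := by ring
        have e2 : ((i:ℝ) + 2) * ψ = ((i:ℝ) + 1) * ψ + ψ := by ring
        rw [e1, e2, Real.cos_sub, Real.cos_add]; ring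
      have hs : Real.sin ((i:ℝ) * ψ) + Real.sin (((i:ℝ) + 2) * ψ)
          = 2 * Real.cos ψ * Real.sin (((i:ℝ) + 1) * ψ) := by
        have e1 : (i:ℝ) * ψ = ((i:ℝ) + 1) * ψ - ψ := by ring
        have e2 : ((i:ℝ) + 2) * ψ = ((i:ℝ) + 1) * ψ + ψ := by ring
        rw [e1, e2, Real.sin_sub, Real.sin_add]; ring
      rw [smul_add, smul_smul, smul_smul, ← hc, ← hs, add_smul, add_smul]
      abel
    set L : ℝ := Real.sqrt (2 - 2 * Real.cos ψ) with hL
    have h1 : ‖x (i + 1) - x i‖ = L := hdiff i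
    have h2 : ‖x (i + 1) - x (i + 1 + 1)‖ = L := by
      rw [norm_sub_rev]; exact hdiff (i + 1)
    refine ⟨L⁻¹ * (2 - 2 * Real.cos ψ), ?_⟩
    rw [h1, h2, ← smul_add]
    have hcomb : x (i + 1) - x i + (x (i + 1) - x (i + 1 + 1)) =
        (2 - 2 * Real.cos ψ) • x (i + 1) := by
      have : x (i + 1) - x i + (x (i + 1) - x (i + 1 + 1)) =
          (2:ℝ) • x (i + 1) - (x i + x (i + 2)) := by
        show x (i + 1) - x i + (x (i + 1) - x (i + 2)) = _
        rw [two_smul]; abel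
      rw [this, key, sub_smul]
    rw [hcomb, smul_smul]
end
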